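/- There exists a critical offspring distribution ξ (E[ξ]=1, σ²=Var(ξ)<∞, P(ξ=0)>0, P(ξ=1)>0) and n, k with E[W_k(T_n)] > 1 + kσ², where T_n is the Galton–Watson tree conditioned on n vertices. -/

import Mathlib

/-- Rooted ordered (plane) trees in which every vertex has at most two children. -/
inductive BTree where
  | leaf : BTree
  | one  : BTree → BTree
  | two  : BTree → BTree → BTree
deriving DecidableEq

namespace BTree

/-- Number of vertices. -/
def size : BTree → ℕ
  | leaf => 1
  | one t => 1 + size t
  | two s t => 1 + size s + size t

/-- The Galton–Watson probability of a finite tree: the product over all vertices v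
of p_{d(v)}, where d(v) is the outdegree of v. -/
noncomputable def gwProb (p : ℕ → ℝ) : BTree → ℝ
  | leaf => p 0
  | one t => p 1 * gwProb p t
  | two s t => p 2 * gwProb p s * gwProb p t

/-- `W k t` is the number of vertices of `t` at distance `k` from the root (the profile). -/
def W : ℕ → BTree → ℕ
  | 0, _ => 1
  | _+1, leaf => 0
  | k+1, one t => W k t
  | k+1, two s t => W k s + W k t

end BTree

/-- The offspring distribution p₀ = (1-ε)/2, p₁ = ε, p₂ = (1-ε)/2. -/
noncomputable def offspring (ε : ℝ) : ℕ → ℝ :=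
  fun n => if n = 0 then (1 - ε) / 2 else if n = 1 then ε else if n = 2 then (1 - ε) / 2 else 0

open BTree

/-- E[W_k(T_n)]: the expectation of the number of vertices at distance `k` from the root
of the Galton–Watson tree with offspring distribution `p` conditioned to have `n` vertices. -/
noncomputable def condExpW (p : ℕ → ℝ) (n k : ℕ) : ℝ :=
  (∑' t : BTree, if size t = n then gwProb p t * (W k t : ℝ) else 0) /
    (∑' t : BTree, if size t = n then gwProb p t else 0)

/-!
Conditioned on three vertices, a tree with offspring in {0, 1, 2} is either the path
(`W 1 = 1`, weight `p₁² p₀`) or the cherry (`W 1 = 2`, weight `p₂ p₀²`). For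
`p₀ = p₂ = (1 - ε) / 2`, `p₁ = ε` the variance is `σ² = 1 - ε`, and
`E[W₁(T₃)] = (ε² + 2q²) / (ε² + q²)` with `q = (1 - ε) / 2` exceeds `1 + σ² = 2 - ε`
exactly when `0 < ε < 1 / 5`.
-/

namespace BTree

lemma one_le_size (t : BTree) : 1 ≤ size t := by
  cases t <;> simp only [size] <;> omega

lemma size_eq_one_iff {t : BTree} : size t = 1 ↔ t = leaf := by
  cases t with
  | leaf => simp [size]
  | one s => have := one_le_size s; simp [size]; omega
  | two s u => have := one_le_size s; simp [size]; omega

lemma size_eq_two_iff {t : BTree} : size t = 2 ↔ t = one leaf := by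
  cases t with
  | leaf => simp [size]
  | one s => simp [size, ← size_eq_one_iff]; omega
  | two s u => have := one_le_size s; have := one_le_size u; simp [size]; omega

lemma size_eq_three_iff {t : BTree} : size t = 3 ↔ t = one (one leaf) ∨ t = two leaf leaf := by
  cases t with
  | leaf => simp [size]
  | one s => simp [size, ← size_eq_two_iff]; omega
  | two s u =>
    have := one_le_size s; have := one_le_size u
    simp [size, ← size_eq_one_iff]; omega

lemma tsum_size_eq_three (f : BTree → ℝ) :
    ∑' t : BTree, (if size t = 3 then f t else 0) = f (one (one leaf)) + f (two leaf leaf) := by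
  rw [tsum_eq_sum (s := {one (one leaf), two leaf leaf}), Finset.sum_pair (by simp)]
  · simp [size]
  · intro t ht
    simp only [Finset.mem_insert, Finset.mem_singleton, not_or] at ht
    simp [size_eq_three_iff, ht]

end BTree

lemma condExpW_three_one (p : ℕ → ℝ) :
    condExpW p 3 1 = (p 1 ^ 2 * p 0 + 2 * p 2 * p 0 ^ 2) / (p 1 ^ 2 * p 0 + p 2 * p 0 ^ 2) := by
  simp only [condExpW, tsum_size_eq_three, gwProb, W]
  push_cast
  ring

section offspring

variable {ε : ℝ}

@[simp] lemma offspring_zero : offspring ε 0 = (1 - ε) / 2 := rfl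
@[simp] lemma offspring_one : offspring ε 1 = ε := rfl
@[simp] lemma offspring_two : offspring ε 2 = (1 - ε) / 2 := rfl

lemma offspring_of_three_le {j : ℕ} (hj : 3 ≤ j) : offspring ε j = 0 := by
  simp only [offspring]
  split_ifs <;> first | rfl | omega

lemma offspring_nonneg (h0 : 0 ≤ ε) (h1 : ε ≤ 1) (j : ℕ) : 0 ≤ offspring ε j := by
  unfold offspring
  split_ifs <;> linarith

lemma offspring_variance : offspring ε 1 + 4 * offspring ε 2 - 1 = 1 - ε := by
  simp only [offspring_one, offspring_two]
  ring

lemma two_sub_lt_condExpW_offspring (h0 : 0 < ε) (h1 : ε < 1 / 5) :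
    2 - ε < condExpW (offspring ε) 3 1 := by
  have hq : 0 < (1 - ε) / 2 := by linarith
  have key : 0 < ε * (1 - ε) ^ 2 * (1 - 5 * ε) :=
    mul_pos (mul_pos h0 (pow_pos (by linarith) 2)) (by linarith)
  rw [condExpW_three_one]
  simp only [offspring_zero, offspring_one, offspring_two]
  rw [lt_div_iff₀ (by positivity)]
  -- numerator minus (2 - ε) · denominator is exactly ε (1 - ε)² (1 - 5ε) / 8
  linear_combination key / 8

end offspring

/-- There is a critical offspring distribution ξ (supported on {0,1,2}, so with finite
variance σ² = E[ξ²] - 1 = p₁ + 4p₂ - 1), with P(ξ=0)>0, P(ξ=1)>0, and n, k such that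
E[W_k(T_n)] > 1 + kσ². -/
theorem exists_profile_exceeding_limit :
    ∃ (p : ℕ → ℝ) (n k : ℕ), (∀ j, 0 ≤ p j) ∧ (∀ j, 3 ≤ j → p j = 0) ∧
      p 0 + p 1 + p 2 = 1 ∧ 0 < p 0 ∧ 0 < p 1 ∧
      p 1 + 2 * p 2 = 1 ∧   -- E[ξ] = 1 (criticality)
      condExpW p n k > 1 + (k : ℝ) * (p 1 + 4 * p 2 - 1) := by
  refine ⟨offspring (1 / 10), 3, 1, offspring_nonneg (by norm_num) (by norm_num),
    fun _ => offspring_of_three_le, by norm_num, by norm_num, by norm_num, by norm_num, ?_⟩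
  rw [offspring_variance]
  linarith [two_sub_lt_condExpW_offspring (ε := 1 / 10) (by norm_num) (by norm_num)]
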